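/- Let G be a finite group with identity e, and let {I, J} be a partition of [n] with |I| = ⌈n/2⌉ and |J| = ⌊n/2⌋. Then {(i,e,i) : i ∈ [n]} ∪ {(i,g,j) : i ∈ I, j ∈ J, g ∈ G} is an independent subset of the Brandt semigroup B(G,n). -/

import Mathlib

/-- The Brandt semigroup `B(G, n)` over a group (or semigroup) `G`. -/
def BrandtSG (G : Type*) (n : ℕ) : Type _ := Option (Fin n × G × Fin n)

def BrandtSG.mul {G : Type*} [Mul G] {n : ℕ} : BrandtSG G n → BrandtSG G n → BrandtSG G n
  | some (i, a, j), some (k, b, l) => if j = k then some (i, a * b, l) else none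
  | _, _ => none

instance (G : Type*) [Mul G] (n : ℕ) : Mul (BrandtSG G n) := ⟨BrandtSG.mul⟩

instance (G : Type*) [Semigroup G] (n : ℕ) : Semigroup (BrandtSG G n) where
  mul_assoc a b c := by
    show BrandtSG.mul (BrandtSG.mul a b) c = BrandtSG.mul a (BrandtSG.mul b c)
    rcases a with _ | ⟨i, a, j⟩ <;> rcases b with _ | ⟨k, b, l⟩ <;> rcases c with _ | ⟨p, c, q⟩
    all_goals (try rfl)
    case some.some.none =>
      show BrandtSG.mul (if j = k then some (i, a * b, l) else none : Option _) none = none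
      by_cases h1 : j = k <;> simp only [h1, ite_true, ite_false] <;> rfl
    case some.some.some =>
      show BrandtSG.mul (if j = k then some (i, a * b, l) else none : Option _) (some (p, c, q)) =
        BrandtSG.mul (some (i, a, j)) (if l = p then some (k, b * c, q) else none : Option _)
      by_cases h1 : j = k <;> by_cases h2 : l = p
      · subst k p
        simp only [ite_true]
        show (if l = l then some (i, a * b * c, q) else none : Option _) =
          (if j = j then some (i, a * (b * c), q) else none : Option _)
        simp only [ite_true, mul_assoc]
      · subst k
        simp only [ite_true, h2, ite_false]
        show (if l = p then some (i, a * b * c, q) else none : Option _) = none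
        simp only [h2, ite_false]
      · subst p
        simp only [ite_true, h1, ite_false]
        show none = (if j = k then some (i, a * (b * c), q) else none : Option _)
        simp only [h1, ite_false]
      · simp only [h1, h2, ite_false]
        rfl

/-!
Let `θ` be the zero of `B(G, n)`. The diagonal idempotents `(i, e, i)` act as partial identities,
so multiplying by them returns the other factor or `θ`, and a product of two off-diagonal elements
`(i, g, j)(k, h, l)` with `j ∈ J`, `k ∈ I` is `θ` because `I` and `J` are disjoint. Hence any
product of two elements of `U` is one of the factors or `θ`, so for every `a ∈ U` the set
`(U \ {a}) ∪ {θ}` is a subsemigroup, and it does not contain `a`.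
-/

section Semigroup

variable {M : Type*} [Semigroup M]

theorem Subsemigroup.closure_subset_insert_of_mul_mem {S : Set M} {z : M}
    (hzl : ∀ x, z * x = z) (hzr : ∀ x, x * z = z)
    (hS : ∀ x ∈ S, ∀ y ∈ S, x * y ∈ insert z S) :
    (Subsemigroup.closure S : Set M) ⊆ insert z S := by
  let T : Subsemigroup M :=
    { carrier := insert z S
      mul_mem' := by
        rintro x y (rfl | hx) (rfl | hy)
        · exact .inl (hzl _)
        · exact .inl (hzl _)
        · exact .inl (hzr _)
        · exact hS x hx y hy }
  exact Subsemigroup.closure_le (S := T).2 (Set.subset_insert z S)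

theorem Subsemigroup.notMem_closure_diff_singleton_of_mul_mem {U : Set M} {z : M}
    (hzl : ∀ x, z * x = z) (hzr : ∀ x, x * z = z) (hzU : z ∉ U)
    (hU : ∀ x ∈ U, ∀ y ∈ U, x * y ∈ ({x, y, z} : Set M)) :
    ∀ a ∈ U, a ∉ Subsemigroup.closure (U \ {a}) := by
  intro a ha hmem
  have hS : ∀ x ∈ U \ {a}, ∀ y ∈ U \ {a}, x * y ∈ insert z (U \ {a}) := by
    rintro x hx y hy
    rcases hU x hx.1 y hy.1 with h | h | h
    · exact .inr (h.symm ▸ hx)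
    · exact .inr (h.symm ▸ hy)
    · exact .inl h
  rcases closure_subset_insert_of_mul_mem hzl hzr hS hmem with rfl | h
  · exact hzU ha
  · exact h.2 rfl

end Semigroup

namespace BrandtSG

variable {G : Type*} {n : ℕ}

def mk (i : Fin n) (g : G) (j : Fin n) : BrandtSG G n := some (i, g, j)

def zero : BrandtSG G n := none

theorem eq_zero_or_eq_mk (x : BrandtSG G n) : x = zero ∨ ∃ i g j, x = mk i g j := by
  rcases x with _ | ⟨i, g, j⟩
  · exact .inl rfl
  · exact .inr ⟨i, g, j, rfl⟩

theorem mk_ne_zero (i : Fin n) (g : G) (j : Fin n) : mk i g j ≠ zero :=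
  Option.some_ne_none _

def diagonalOnes (G : Type*) [One G] (n : ℕ) : Set (BrandtSG G n) :=
  {x | ∃ i : Fin n, x = mk i 1 i}

def block (G : Type*) {n : ℕ} (I J : Set (Fin n)) : Set (BrandtSG G n) :=
  {x | ∃ i ∈ I, ∃ j ∈ J, ∃ g : G, x = mk i g j}

section Mul

variable [Mul G]

theorem mk_mul_mk (i j k l : Fin n) (a b : G) :
    mk i a j * mk k b l = if j = k then mk i (a * b) l else zero :=
  rfl

theorem zero_mul (x : BrandtSG G n) : zero * x = zero :=
  rfl

theorem mul_zero (x : BrandtSG G n) : x * zero = zero := by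
  rcases eq_zero_or_eq_mk x with rfl | ⟨i, a, j, rfl⟩ <;> rfl

theorem block_mul_block {I J : Set (Fin n)} (hIJ : Disjoint I J) {x y : BrandtSG G n}
    (hx : x ∈ block G I J) (hy : y ∈ block G I J) : x * y = zero := by
  obtain ⟨-, -, j, hj, a, rfl⟩ := hx
  obtain ⟨k, hk, -, -, b, rfl⟩ := hy
  rw [mk_mul_mk, if_neg (hIJ.ne_of_mem hk hj).symm]

end Mul

section MulOneClass

variable [MulOneClass G]

theorem mk_one_mul_mem (i : Fin n) (y : BrandtSG G n) :
    mk i 1 i * y ∈ ({y, zero} : Set (BrandtSG G n)) := by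
  obtain rfl | ⟨k, b, l, rfl⟩ := eq_zero_or_eq_mk y
  · exact .inr (mul_zero _)
  rw [mk_mul_mk]
  split_ifs with h
  · exact .inl (by rw [h, one_mul])
  · exact .inr rfl

theorem mul_mk_one_mem (x : BrandtSG G n) (i : Fin n) :
    x * mk i 1 i ∈ ({x, zero} : Set (BrandtSG G n)) := by
  obtain rfl | ⟨k, a, l, rfl⟩ := eq_zero_or_eq_mk x
  · exact .inr (zero_mul _)
  rw [mk_mul_mk]
  split_ifs with h
  · exact .inl (by rw [h, mul_one])
  · exact .inr rfl

theorem mul_mem_of_mem_diagonalOnes_union_block {I J : Set (Fin n)} (hIJ : Disjoint I J)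
    {x y : BrandtSG G n} (hx : x ∈ diagonalOnes G n ∪ block G I J)
    (hy : y ∈ diagonalOnes G n ∪ block G I J) :
    x * y ∈ ({x, y, zero} : Set (BrandtSG G n)) := by
  rcases hx with ⟨i, rfl⟩ | hx
  · rcases mk_one_mul_mem i y with h | h
    · exact .inr (.inl h)
    · exact .inr (.inr h)
  rcases hy with ⟨i, rfl⟩ | hy
  · rcases mul_mk_one_mem x i with h | h
    · exact .inl h
    · exact .inr (.inr h)
  · exact .inr (.inr (block_mul_block hIJ hx hy))

theorem zero_notMem_diagonalOnes_union_block (I J : Set (Fin n)) :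
    zero ∉ diagonalOnes G n ∪ block G I J := by
  rintro (⟨i, h⟩ | ⟨i, -, j, -, g, h⟩) <;> exact mk_ne_zero _ _ _ h.symm

end MulOneClass

end BrandtSG

theorem brandt_independent_set_general (G : Type*) [Group G] (n : ℕ)
    (I J : Set (Fin n)) (hdisj : I ∩ J = ∅) :
    let U : Set (BrandtSG G n) :=
      {x | ∃ i : Fin n, x = some (i, 1, i)} ∪
      {x | ∃ i ∈ I, ∃ j ∈ J, ∃ g : G, x = some (i, g, j)}
    ∀ a ∈ U, a ∉ Subsemigroup.closure (U \ {a}) := by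
  have hIJ : Disjoint I J := Set.disjoint_iff_inter_eq_empty.2 hdisj
  exact Subsemigroup.notMem_closure_diff_singleton_of_mul_mem BrandtSG.zero_mul
    BrandtSG.mul_zero (BrandtSG.zero_notMem_diagonalOnes_union_block I J)
    fun x hx y hy => BrandtSG.mul_mem_of_mem_diagonalOnes_union_block hIJ hx hy

theorem brandt_independent_set (G : Type*) [Group G] [Fintype G] (n : ℕ)
    (I J : Set (Fin n)) (hIJ : I ∪ J = Set.univ) (hdisj : I ∩ J = ∅)
    (hI : I.ncard = (n + 1) / 2) (hJ : J.ncard = n / 2) :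
    let U : Set (BrandtSG G n) :=
      {x | ∃ i : Fin n, x = some (i, 1, i)} ∪
      {x | ∃ i ∈ I, ∃ j ∈ J, ∃ g : G, x = some (i, g, j)}
    ∀ a ∈ U, a ∉ Subsemigroup.closure (U \ {a}) :=
  brandt_independent_set_general G n I J hdisj
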